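/- arXiv:1803.06402 — 2 statements merged into one kernel-verified Lean document; each statement's English description precedes it below -/
import Mathlib

section
/- Let $(A_m)_{m\in\mathbb{Z}}$ be a uniformly bounded sequence of invertible bounded operators on a Banach space $X$ admitting an exponential dichotomy. Then for each sequence $(y_n)_{n\in\mathbb{Z}}\subset X$ with $\lim_{|n|\to\infty}\|y_{n+1}-A_ny_n\|=0$, there exists a unique sequence $(x_n)_{n\in\mathbb{Z}}$ satisfying $x_{n+1}=A_nx_n$ for all $n$ and $\lim_{|n|\to\infty}\|x_n-y_n\|=0$. -/
/-!
Write `g k = A (k - 1) (y (k - 1)) - y k` for the defects of `y`; they tend to zero. The Green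
function `G n k` of the dichotomy (the evolution of the stable part for `k ≤ n`, minus that of
the unstable part for `k > n`) has norm at most `C e^{-lam |n - k|}`, so `w n = ∑ₖ G n k (g k)`
converges, solves `w (n + 1) = A n (w n) + g (n + 1)`, and tends to zero as a convolution of a
summable kernel with a null sequence. Hence `y + w` is a trajectory shadowing `y`.

Two such trajectories differ by a trajectory `x` tending to zero at both ends. Its stable part at
`n` is bounded by `C ‖x m‖` for every `m ≤ n` and its unstable part by `C ‖x m‖` for every
`m ≥ n`, so both vanish.
-/

open Filter Topology

/-- The sequence `A` of bounded operators admits an exponential dichotomy: there exist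
an evolution family `E`, projections `P` commuting with the dynamics and constants
`C, lam > 0` with the usual exponential bounds. -/
def ExpDichotomy {X : Type*} [NormedAddCommGroup X] [NormedSpace ℝ X]
    (A : ℤ → X →L[ℝ] X) : Prop :=
  ∃ (E : ℤ → ℤ → X →L[ℝ] X) (P : ℤ → X →L[ℝ] X) (C lam : ℝ),
    0 < C ∧ 0 < lam ∧
    (∀ n, E n n = ContinuousLinearMap.id ℝ X) ∧
    (∀ m n, E (m + 1) n = (A m).comp (E m n)) ∧
    (∀ m, (P m).comp (P m) = P m) ∧
    (∀ m, (P (m + 1)).comp (A m) = (A m).comp (P m)) ∧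
    (∀ m n, n ≤ m → ‖(E m n).comp (P n)‖ ≤ C * Real.exp (-lam * ((m - n : ℤ) : ℝ))) ∧
    (∀ m n, m ≤ n → ‖(E m n).comp (ContinuousLinearMap.id ℝ X - P n)‖ ≤
      C * Real.exp (-lam * ((n - m : ℤ) : ℝ)))

theorem summable_exp_neg_mul_abs_int {lam : ℝ} (hlam : 0 < lam) :
    Summable fun j : ℤ => Real.exp (-lam * |(j : ℝ)|) := by
  have hnat : Summable fun n : ℕ => Real.exp (-lam * n) := by
    simpa only [← Real.exp_nat_mul, mul_comm] using
      summable_geometric_of_lt_one (Real.exp_pos (-lam)).le (Real.exp_lt_one_iff.2 (by linarith))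
  exact Summable.of_nat_of_neg (by simpa using hnat) (by simpa using hnat)

theorem hasSum_mul_comp_sub {κ u : ℤ → ℝ} (hκ : Summable κ)
    (hu : BddAbove (Set.range fun k => |u k|)) (n : ℤ) :
    HasSum (fun k => κ (n - k) * u k) (∑' j, κ j * u (n - j)) := by
  obtain ⟨B, hB⟩ := hu
  have hsum : Summable fun j => κ j * u (n - j) := by
    refine Summable.of_norm_bounded (hκ.abs.mul_right B) fun j => ?_
    rw [norm_mul, Real.norm_eq_abs, Real.norm_eq_abs]
    exact mul_le_mul_of_nonneg_left (hB ⟨n - j, rfl⟩) (abs_nonneg _)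
  simpa [Function.comp_def] using (Equiv.subLeft n).hasSum_iff.2 hsum.hasSum

theorem tendsto_tsum_mul_comp_sub_cofinite {κ u : ℤ → ℝ} (hκ : Summable κ)
    (hu : Tendsto u cofinite (𝓝 0)) :
    Tendsto (fun n => ∑' j, κ j * u (n - j)) cofinite (𝓝 0) := by
  have hu_abs : Tendsto (fun k => |u k|) cofinite (𝓝 0) := by simpa using hu.abs
  obtain ⟨B, hB⟩ := hu_abs.bddAbove_range_of_cofinite
  have hpoint (j : ℤ) : Tendsto (fun n => κ j * u (n - j)) cofinite (𝓝 0) := by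
    simpa using (hu.comp sub_left_injective.tendsto_cofinite).const_mul (κ j)
  have hbound : ∀ᶠ n in cofinite, ∀ j, ‖κ j * u (n - j)‖ ≤ |κ j| * B :=
    Eventually.of_forall fun n j => by
      rw [norm_mul, Real.norm_eq_abs, Real.norm_eq_abs]
      exact mul_le_mul_of_nonneg_left (hB ⟨n - j, rfl⟩) (abs_nonneg _)
  simpa using tendsto_tsum_of_dominated_convergence (hκ.abs.mul_right B) hpoint hbound

section Dichotomy

variable {X : Type*} [NormedAddCommGroup X] [NormedSpace ℝ X]

structure IsExpDichotomyWith (A : ℤ → X →L[ℝ] X) (E : ℤ → ℤ → X →L[ℝ] X) (P : ℤ → X →L[ℝ] X)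
    (C lam : ℝ) : Prop where
  lam_pos : 0 < lam
  evol_self : ∀ n, E n n = ContinuousLinearMap.id ℝ X
  evol_succ : ∀ m n, E (m + 1) n = (A m).comp (E m n)
  proj_comm : ∀ m, (P (m + 1)).comp (A m) = (A m).comp (P m)
  norm_stable_le : ∀ m n, n ≤ m → ‖(E m n).comp (P n)‖ ≤ C * Real.exp (-lam * ((m - n : ℤ) : ℝ))
  norm_unstable_le : ∀ m n, m ≤ n →
    ‖(E m n).comp (ContinuousLinearMap.id ℝ X - P n)‖ ≤ C * Real.exp (-lam * ((n - m : ℤ) : ℝ))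

noncomputable def green (E : ℤ → ℤ → X →L[ℝ] X) (P : ℤ → X →L[ℝ] X) (n k : ℤ) : X →L[ℝ] X :=
  if k ≤ n then (E n k).comp (P k) else -(E n k).comp (ContinuousLinearMap.id ℝ X - P k)

noncomputable def greenSum (E : ℤ → ℤ → X →L[ℝ] X) (P : ℤ → X →L[ℝ] X) (g : ℤ → X) (n : ℤ) : X :=
  ∑' k, green E P n k (g k)

namespace IsExpDichotomyWith

variable {A : ℤ → X →L[ℝ] X} {E : ℤ → ℤ → X →L[ℝ] X} {P : ℤ → X →L[ℝ] X} {C lam : ℝ}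
  {g : ℤ → X}

theorem evol_succ_apply (h : IsExpDichotomyWith A E P C lam) (m n : ℤ) (v : X) :
    E (m + 1) n v = A m (E m n v) := by
  rw [h.evol_succ]; rfl

theorem apply_eq_evol_apply (h : IsExpDichotomyWith A E P C lam)
    (hA : ∀ m, Function.Injective (A m)) {x : ℤ → X} (hx : ∀ n, x (n + 1) = A n (x n))
    (m n : ℤ) : x m = E m n (x n) := by
  induction m using Int.inductionOn' (b := n) with
  | zero => simp [h.evol_self]
  | succ k _ ih => rw [hx, ih, h.evol_succ_apply]
  | pred k _ ih =>
    apply hA (k - 1)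
    rw [← hx, ← h.evol_succ_apply, sub_add_cancel, ih]

theorem proj_evol_apply (h : IsExpDichotomyWith A E P C lam)
    (hA : ∀ m, Function.Injective (A m)) (m n : ℤ) (v : X) :
    P m (E m n v) = E m n (P n v) := by
  have hP (k : ℤ) (w : X) : P (k + 1) (A k w) = A k (P k w) := by
    rw [← ContinuousLinearMap.comp_apply, h.proj_comm]; rfl
  have htraj : ∀ k, P (k + 1) (E (k + 1) n v) = A k (P k (E k n v)) := fun k => by
    rw [h.evol_succ_apply, hP]
  simpa [h.evol_self] using h.apply_eq_evol_apply hA (x := fun k => P k (E k n v)) htraj m n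

theorem C_nonneg (h : IsExpDichotomyWith A E P C lam) : 0 ≤ C := by
  simpa using (norm_nonneg _).trans (h.norm_stable_le 0 0 le_rfl)

theorem exp_neg_mul_le_one (h : IsExpDichotomyWith A E P C lam) {a b : ℤ} (hab : a ≤ b) :
    Real.exp (-lam * ((b - a : ℤ) : ℝ)) ≤ 1 :=
  Real.exp_le_one_iff.2 <| mul_nonpos_of_nonpos_of_nonneg (neg_nonpos.2 h.lam_pos.le)
    (by exact_mod_cast sub_nonneg.2 hab)

theorem norm_evol_comp_proj_le (h : IsExpDichotomyWith A E P C lam) {m n : ℤ} (hnm : n ≤ m) :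
    ‖(E m n).comp (P n)‖ ≤ C :=
  (h.norm_stable_le m n hnm).trans (mul_le_of_le_one_right h.C_nonneg (h.exp_neg_mul_le_one hnm))

theorem norm_evol_comp_sub_proj_le (h : IsExpDichotomyWith A E P C lam) {m n : ℤ} (hmn : m ≤ n) :
    ‖(E m n).comp (ContinuousLinearMap.id ℝ X - P n)‖ ≤ C :=
  (h.norm_unstable_le m n hmn).trans
    (mul_le_of_le_one_right h.C_nonneg (h.exp_neg_mul_le_one hmn))

theorem norm_proj_apply_le (h : IsExpDichotomyWith A E P C lam)
    (hA : ∀ m, Function.Injective (A m)) {x : ℤ → X} (hx : ∀ n, x (n + 1) = A n (x n))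
    {m n : ℤ} (hmn : m ≤ n) : ‖P n (x n)‖ ≤ C * ‖x m‖ := by
  rw [h.apply_eq_evol_apply hA hx n m, h.proj_evol_apply hA, ← ContinuousLinearMap.comp_apply]
  exact ((E n m).comp (P m)).le_of_opNorm_le (h.norm_evol_comp_proj_le hmn) _

theorem norm_sub_proj_apply_le (h : IsExpDichotomyWith A E P C lam)
    (hA : ∀ m, Function.Injective (A m)) {x : ℤ → X} (hx : ∀ n, x (n + 1) = A n (x n))
    {m n : ℤ} (hnm : n ≤ m) : ‖x n - P n (x n)‖ ≤ C * ‖x m‖ := by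
  have hx' : x n - P n (x n) = (E n m).comp (ContinuousLinearMap.id ℝ X - P m) (x m) := by
    rw [h.apply_eq_evol_apply hA hx n m, h.proj_evol_apply hA]
    simp
  rw [hx']
  exact ContinuousLinearMap.le_of_opNorm_le _ (h.norm_evol_comp_sub_proj_le hnm) _

theorem eq_zero_of_tendsto_norm (h : IsExpDichotomyWith A E P C lam)
    (hA : ∀ m, Function.Injective (A m)) {x : ℤ → X} (hx : ∀ n, x (n + 1) = A n (x n))
    (hlim : Tendsto (fun n => ‖x n‖) cofinite (𝓝 0)) : x = 0 := by
  rw [Int.cofinite_eq, tendsto_sup] at hlim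
  funext n
  have hstable : ‖P n (x n)‖ ≤ 0 :=
    ge_of_tendsto (by simpa using hlim.1.const_mul C)
      (eventually_atBot.2 ⟨n, fun m hm => h.norm_proj_apply_le hA hx hm⟩)
  have hunstable : ‖x n - P n (x n)‖ ≤ 0 :=
    ge_of_tendsto (by simpa using hlim.2.const_mul C)
      (eventually_atTop.2 ⟨n, fun m hm => h.norm_sub_proj_apply_le hA hx hm⟩)
  rw [norm_le_zero_iff] at hstable hunstable
  rwa [hstable, sub_zero] at hunstable

theorem eq_of_tendsto_norm_sub (h : IsExpDichotomyWith A E P C lam)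
    (hA : ∀ m, Function.Injective (A m)) {x x' : ℤ → X} (hx : ∀ n, x (n + 1) = A n (x n))
    (hx' : ∀ n, x' (n + 1) = A n (x' n))
    (hlim : Tendsto (fun n => ‖x n - x' n‖) cofinite (𝓝 0)) : x = x' :=
  sub_eq_zero.1 <| h.eq_zero_of_tendsto_norm hA (fun n => by simp [hx, hx']) hlim

theorem norm_green_le (h : IsExpDichotomyWith A E P C lam) (n k : ℤ) :
    ‖green E P n k‖ ≤ C * Real.exp (-lam * |((n - k : ℤ) : ℝ)|) := by
  unfold green
  split_ifs with hkn
  · rw [abs_of_nonneg (by exact_mod_cast sub_nonneg.2 hkn)]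
    exact h.norm_stable_le n k hkn
  · rw [norm_neg, ← Int.cast_abs, abs_sub_comm, abs_of_nonneg (sub_nonneg.2 (not_le.1 hkn).le)]
    exact h.norm_unstable_le n k (not_le.1 hkn).le

theorem green_succ_apply (h : IsExpDichotomyWith A E P C lam) (n k : ℤ) (v : X) :
    green E P (n + 1) k v = A n (green E P n k v) + if k = n + 1 then v else 0 := by
  unfold green
  rcases lt_trichotomy k (n + 1) with hk | rfl | hk
  · simp [hk.ne, Int.lt_add_one_iff.1 hk, hk.le, h.evol_succ_apply]
  · have hA (w : X) : A n (E n (n + 1) w) = w := by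
      simpa [h.evol_self] using (h.evol_succ_apply n (n + 1) w).symm
    simp [h.evol_self, hA]
  · simp [hk.ne', not_le.2 hk, not_le.2 (Int.lt_of_add_one_le hk.le), h.evol_succ_apply]

theorem summable_expKernel (h : IsExpDichotomyWith A E P C lam) :
    Summable fun j : ℤ => C * Real.exp (-lam * |(j : ℝ)|) :=
  (summable_exp_neg_mul_abs_int h.lam_pos).mul_left C

theorem norm_green_apply_le (h : IsExpDichotomyWith A E P C lam) (n k : ℤ) (v : X) :
    ‖green E P n k v‖ ≤ C * Real.exp (-lam * |((n - k : ℤ) : ℝ)|) * ‖v‖ :=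
  (green E P n k).le_of_opNorm_le (h.norm_green_le n k) v

theorem hasSum_expKernel_mul_norm (h : IsExpDichotomyWith A E P C lam)
    (hg : BddAbove (Set.range fun k => ‖g k‖)) (n : ℤ) :
    HasSum (fun k => C * Real.exp (-lam * |((n - k : ℤ) : ℝ)|) * ‖g k‖)
      (∑' j : ℤ, C * Real.exp (-lam * |(j : ℝ)|) * ‖g (n - j)‖) :=
  hasSum_mul_comp_sub h.summable_expKernel (by simpa using hg) n

theorem summable_green_apply [CompleteSpace X] (h : IsExpDichotomyWith A E P C lam)
    (hg : BddAbove (Set.range fun k => ‖g k‖)) (n : ℤ) :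
    Summable fun k => green E P n k (g k) :=
  .of_norm_bounded (h.hasSum_expKernel_mul_norm hg n).summable fun k => h.norm_green_apply_le n k _

theorem norm_greenSum_le (h : IsExpDichotomyWith A E P C lam)
    (hg : BddAbove (Set.range fun k => ‖g k‖)) (n : ℤ) :
    ‖greenSum E P g n‖ ≤ ∑' j : ℤ, C * Real.exp (-lam * |(j : ℝ)|) * ‖g (n - j)‖ :=
  tsum_of_norm_bounded (h.hasSum_expKernel_mul_norm hg n) fun k => h.norm_green_apply_le n k _

theorem tendsto_norm_greenSum (h : IsExpDichotomyWith A E P C lam)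
    (hg : Tendsto (fun k => ‖g k‖) cofinite (𝓝 0)) :
    Tendsto (fun n => ‖greenSum E P g n‖) cofinite (𝓝 0) :=
  squeeze_zero (fun _ => norm_nonneg _) (h.norm_greenSum_le hg.bddAbove_range_of_cofinite)
    (tendsto_tsum_mul_comp_sub_cofinite h.summable_expKernel hg)

theorem greenSum_succ [CompleteSpace X] (h : IsExpDichotomyWith A E P C lam)
    (hg : BddAbove (Set.range fun k => ‖g k‖)) (n : ℤ) :
    greenSum E P g (n + 1) = A n (greenSum E P g n) + g (n + 1) := by
  have hstep := (h.summable_green_apply hg n).hasSum.mapL (A n)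
  have hsource : HasSum (fun k => if k = n + 1 then g k else 0) (g (n + 1)) := by
    simpa using hasSum_single (f := fun k => if k = n + 1 then g k else 0) (n + 1)
      fun k hk => if_neg hk
  simp only [greenSum, h.green_succ_apply]
  exact (hstep.add hsource).tsum_eq

end IsExpDichotomyWith

end Dichotomy

theorem linear_limit_shadowing_general {X : Type*} [NormedAddCommGroup X]
    [NormedSpace ℝ X] [CompleteSpace X]
    (A : ℤ → X ≃L[ℝ] X)
    (hED : ExpDichotomy fun m => (A m : X →L[ℝ] X))
    (y : ℤ → X)
    (hy : Filter.Tendsto (fun n => ‖y (n + 1) - A n (y n)‖) (Filter.cocompact ℤ) (nhds 0)) :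
    ∃! x : ℤ → X, (∀ n, x (n + 1) = A n (x n)) ∧
      Filter.Tendsto (fun n => ‖x n - y n‖) (Filter.cocompact ℤ) (nhds 0) := by
  obtain ⟨E, P, C, lam, -, hlam, hE0, hE, -, hP, hs, hu⟩ := hED
  have h : IsExpDichotomyWith (fun m => (A m : X →L[ℝ] X)) E P C lam :=
    ⟨hlam, hE0, hE, hP, hs, hu⟩
  rw [cocompact_eq_cofinite] at hy ⊢
  set g : ℤ → X := fun k => A (k - 1) (y (k - 1)) - y k
  have hg : Tendsto (fun k => ‖g k‖) cofinite (𝓝 0) := by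
    refine (hy.comp (sub_left_injective (b := 1)).tendsto_cofinite).congr fun k => ?_
    rw [Function.comp_apply, sub_add_cancel, norm_sub_rev]
  have hw := h.tendsto_norm_greenSum hg
  set x₀ : ℤ → X := fun n => y n + greenSum E P g n
  have hx₀ (n : ℤ) : x₀ (n + 1) = A n (x₀ n) := by
    have hgn : g (n + 1) = A n (y n) - y (n + 1) := by simp [g]
    change y (n + 1) + greenSum E P g (n + 1) = A n (y n + greenSum E P g n)
    rw [h.greenSum_succ hg.bddAbove_range_of_cofinite, hgn, map_add]
    change y (n + 1) + (A n (greenSum E P g n) + _) = _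
    abel
  have hx₀y (n : ℤ) : x₀ n - y n = greenSum E P g n := add_sub_cancel_left _ _
  refine ⟨x₀, ⟨hx₀, by simpa only [hx₀y] using hw⟩, fun x ⟨hx, hxy⟩ => ?_⟩
  refine h.eq_of_tendsto_norm_sub (fun m => (A m).injective) hx hx₀ ?_
  refine squeeze_zero (fun _ => norm_nonneg _)
    (fun n => norm_sub_le_norm_sub_add_norm_sub _ (y n) _) ?_
  simpa using hxy.add (hw.congr fun n => by rw [norm_sub_rev, hx₀y])

/-- Limit shadowing for linear systems: if the defect of `(y n)` tends to `0` as `|n| → ∞`,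
there is a unique true trajectory of the linear system asymptotic to `(y n)`. -/
theorem linear_limit_shadowing {X : Type*} [NormedAddCommGroup X]
    [NormedSpace ℝ X] [CompleteSpace X]
    (A : ℤ → X ≃L[ℝ] X) (M : ℝ) (hM : ∀ m, ‖(A m : X →L[ℝ] X)‖ ≤ M)
    (hED : ExpDichotomy fun m => (A m : X →L[ℝ] X))
    (y : ℤ → X)
    (hy : Filter.Tendsto (fun n => ‖y (n + 1) - A n (y n)‖) (Filter.cocompact ℤ) (nhds 0)) :
    ∃! x : ℤ → X, (∀ n, x (n + 1) = A n (x n)) ∧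
      Filter.Tendsto (fun n => ‖x n - y n‖) (Filter.cocompact ℤ) (nhds 0) :=
  linear_limit_shadowing_general A hED y hy
end

section
/- In the setting of the nonautonomous Grobman–Hartman theorem, the conjugating maps $h_m$ are surjective: for every $x\in X$ and $m\in\mathbb{Z}$ there exists $y\in X$ with $h_m(y)=x$. -/
open Filter Metric Topology
open scoped NNReal BoundedContinuousFunction

section Interpolation

variable {E F : Type*} [NormedAddCommGroup E] [NormedSpace ℝ E]
  [NormedAddCommGroup F] [NormedSpace ℝ F] {f : E → F} {f' : E → E →L[ℝ] F} {δ D r : ℝ}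

theorem norm_hasFDerivAt_apply_le_of_norm_le_of_holder (hf : ∀ x, HasFDerivAt f (f' x) x)
    (hδ : ∀ x, ‖f x‖ ≤ δ) (hD : 0 ≤ D) (hr : 0 ≤ r)
    (hH : ∀ x y, ‖f' x - f' y‖ ≤ D * ‖x - y‖ ^ r) (x v : E) :
    ‖f' x v‖ ≤ 2 * δ + D * ‖v‖ ^ r * ‖v‖ := by
  have hrem : ‖f (x + v) - f x - f' x v‖ ≤ D * ‖v‖ ^ r * ‖v‖ := by
    have hmem : x + v ∈ closedBall x ‖v‖ := by simp
    have key := (convex_closedBall x ‖v‖).norm_image_sub_le_of_norm_hasFDerivWithin_le'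
      (φ := f' x) (C := D * ‖v‖ ^ r) (fun y _ => (hf y).hasFDerivWithinAt) (fun y hy => ?_)
      (mem_closedBall_self (norm_nonneg v)) hmem
    · simpa using key
    · rw [mem_closedBall, dist_eq_norm] at hy
      exact (hH y x).trans (by gcongr)
  calc ‖f' x v‖ ≤ ‖f (x + v) - f x‖ + ‖f (x + v) - f x - f' x v‖ :=
        norm_le_norm_add_norm_sub _ _
    _ ≤ (δ + δ) + D * ‖v‖ ^ r * ‖v‖ := by
        gcongr
        exact (norm_sub_le _ _).trans (add_le_add (hδ _) (hδ _))
    _ = 2 * δ + D * ‖v‖ ^ r * ‖v‖ := by ring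

theorem norm_hasFDerivAt_le_of_norm_le_of_holder (hf : ∀ x, HasFDerivAt f (f' x) x)
    (hδ : ∀ x, ‖f x‖ ≤ δ) (hD : 0 ≤ D) (hr : 0 ≤ r)
    (hH : ∀ x y, ‖f' x - f' y‖ ≤ D * ‖x - y‖ ^ r) {t : ℝ} (ht : 0 < t) (x : E) :
    ‖f' x‖ ≤ 2 * δ / t + D * t ^ r := by
  have hδ0 : 0 ≤ δ := (norm_nonneg _).trans (hδ x)
  refine ContinuousLinearMap.opNorm_le_of_unit_norm (by positivity) fun u hu => ?_
  have h := norm_hasFDerivAt_apply_le_of_norm_le_of_holder hf hδ hD hr hH x (t • u)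
  rw [map_smul, norm_smul, norm_smul, hu, Real.norm_of_nonneg ht.le, mul_one] at h
  rw [div_add' _ _ _ ht.ne', le_div_iff₀' ht]
  linarith

theorem exists_forall_lipschitzWith_of_norm_le_of_holder {K : ℝ} (hK : 0 ≤ K) (hD : 0 ≤ D)
    (hr : 0 < r) :
    ∃ δ > 0, ∃ κ : ℝ≥0, K * κ < 1 ∧ ∀ (f : E → F) (f' : E → E →L[ℝ] F),
      (∀ x, HasFDerivAt f (f' x) x) → (∀ x, ‖f x‖ ≤ δ) →
      (∀ x y, ‖f' x - f' y‖ ≤ D * ‖x - y‖ ^ r) → LipschitzWith κ f := by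
  have htend : Tendsto (fun t : ℝ => K * (D * t ^ r)) (𝓝[>] 0) (𝓝 0) := by
    have := ((Real.continuousAt_rpow_const 0 r (Or.inr hr.le)).tendsto.const_mul D).const_mul K
    simpa [Real.zero_rpow hr.ne'] using this.mono_left nhdsWithin_le_nhds
  obtain ⟨t, hKt, ht⟩ :=
    ((htend.eventually (gt_mem_nhds one_half_pos)).and self_mem_nhdsWithin).exists
  -- `t` makes the Hölder term `K * (D * t ^ r)` small, then `δ` makes `K * (2 * δ / t)` small.
  set δ := t / (4 * (K + 1))
  refine ⟨δ, by positivity, ⟨2 * δ / t + D * t ^ r, by positivity⟩, ?_,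
    fun f f' hf hδ hH => ?_⟩
  · have h2δ : K * (2 * δ / t) < 1 / 2 := by
      rw [show 2 * δ / t = 1 / (2 * (K + 1)) by simp only [δ]; field_simp; ring, mul_one_div,
        div_lt_iff₀ (by positivity)]
      linarith
    change K * (2 * δ / t + D * t ^ r) < 1
    linarith [mul_add K (2 * δ / t) (D * t ^ r)]
  · refine lipschitzWith_of_nnnorm_fderiv_le (fun x => (hf x).differentiableAt) fun x => ?_
    rw [(hf x).fderiv]
    exact NNReal.coe_le_coe.mp
      (norm_hasFDerivAt_le_of_norm_le_of_holder hf hδ hD hr.le hH ht x)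

end Interpolation

theorem summable_pow_natAbs {q : ℝ} (hq₀ : 0 ≤ q) (hq₁ : q < 1) :
    Summable fun k : ℤ => q ^ k.natAbs :=
  Summable.of_nat_of_neg (by simpa using summable_geometric_of_lt_one hq₀ hq₁)
    (by simpa using summable_geometric_of_lt_one hq₀ hq₁)

theorem eq_zero_of_eventually_norm_le_mul_pow {X : Type*} [NormedAddCommGroup X] {x : X}
    {a q : ℝ} (hq₀ : 0 ≤ q) (hq₁ : q < 1) (h : ∀ᶠ j in atTop, ‖x‖ ≤ a * q ^ j) : x = 0 := by
  have hlim : Tendsto (fun j : ℕ => a * q ^ j) atTop (𝓝 0) := by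
    simpa using (tendsto_pow_atTop_nhds_zero_of_lt_one hq₀ hq₁).const_mul a
  exact norm_le_zero_iff.mp (ge_of_tendsto hlim h)

section Dichotomy

variable {X : Type*} [NormedAddCommGroup X] [NormedSpace ℝ X] {A : ℤ → X →L[ℝ] X}

/-- An exponential dichotomy with the rate `exp (-lam)` written as `q`, so that both bounds take
the form `C * q ^ |m - n|`. -/
structure DichotomyData (A : ℤ → X →L[ℝ] X) where
  E : ℤ → ℤ → X →L[ℝ] X
  P : ℤ → X →L[ℝ] X
  C : ℝ
  q : ℝ
  C_nonneg : 0 ≤ C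
  q_nonneg : 0 ≤ q
  q_lt_one : q < 1
  E_self : ∀ n, E n n = ContinuousLinearMap.id ℝ X
  E_succ : ∀ m n, E (m + 1) n = (A m).comp (E m n)
  P_comm : ∀ m, (P (m + 1)).comp (A m) = (A m).comp (P m)
  norm_stable_le : ∀ m n, n ≤ m → ‖(E m n).comp (P n)‖ ≤ C * q ^ (m - n).natAbs
  norm_unstable_le : ∀ m n, m ≤ n →
    ‖(E m n).comp (ContinuousLinearMap.id ℝ X - P n)‖ ≤ C * q ^ (m - n).natAbs

theorem ExpDichotomy.nonempty_dichotomyData (h : ExpDichotomy A) :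
    Nonempty (DichotomyData A) := by
  obtain ⟨E, P, C, lam, hC, hlam, hE_self, hE_succ, -, hP_comm, hstable, hunstable⟩ := h
  have hexp : ∀ k : ℤ, 0 ≤ k → Real.exp (-lam * k) = Real.exp (-lam) ^ k.natAbs := fun k hk => by
    obtain ⟨j, rfl⟩ := Int.eq_ofNat_of_zero_le hk
    simp [← Real.exp_nat_mul, mul_comm]
  refine ⟨⟨E, P, C, Real.exp (-lam), hC.le, (Real.exp_pos _).le,
    Real.exp_lt_one_iff.mpr (neg_lt_zero.mpr hlam), hE_self, hE_succ, hP_comm,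
    fun m n hnm => ?_, fun m n hmn => ?_⟩⟩
  · rw [← hexp _ (sub_nonneg.mpr hnm)]
    exact hstable m n hnm
  · rw [← Int.natAbs_neg, neg_sub, ← hexp _ (sub_nonneg.mpr hmn)]
    exact hunstable m n hmn

namespace DichotomyData

variable (Δ : DichotomyData A)

noncomputable def green (n k : ℤ) : X →L[ℝ] X :=
  if k ≤ n then (Δ.E n k).comp (Δ.P k)
  else -(Δ.E n k).comp (ContinuousLinearMap.id ℝ X - Δ.P k)

theorem norm_green_le (n k : ℤ) : ‖Δ.green n k‖ ≤ Δ.C * Δ.q ^ (n - k).natAbs := by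
  unfold green
  split_ifs with hkn
  · exact Δ.norm_stable_le n k hkn
  · rw [norm_neg]
    exact Δ.norm_unstable_le n k (le_of_not_ge hkn)

theorem green_succ (n k : ℤ) : Δ.green (n + 1) k =
    (A n).comp (Δ.green n k) + if k = n + 1 then ContinuousLinearMap.id ℝ X else 0 := by
  unfold green
  rcases lt_trichotomy k (n + 1) with hk | rfl | hk
  · rw [if_pos hk.le, if_pos (Int.lt_add_one_iff.mp hk), if_neg hk.ne, Δ.E_succ, add_zero]
    rfl
  · rw [if_pos le_rfl, if_neg (by omega), if_pos rfl, Δ.E_self, ContinuousLinearMap.comp_neg,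
      ← ContinuousLinearMap.comp_assoc, ← Δ.E_succ, Δ.E_self]
    ext x
    simp
  · rw [if_neg hk.not_ge, if_neg (by omega), if_neg hk.ne', Δ.E_succ, add_zero,
      ContinuousLinearMap.comp_neg]
    rfl

theorem apply_eq_E_apply_of_orbit (hA : ∀ m, Function.Injective (A m)) {d : ℤ → X}
    (hd : ∀ n, d (n + 1) = A n (d n)) (n k : ℤ) : d n = Δ.E n k (d k) := by
  induction n using Int.inductionOn' (b := k) with
  | zero => rw [Δ.E_self]; rfl
  | succ p _ ih => rw [hd, ih, Δ.E_succ]; rfl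
  | pred p _ ih =>
    apply hA (p - 1)
    rw [← hd, sub_add_cancel, ih, ← ContinuousLinearMap.comp_apply, ← Δ.E_succ,
      sub_add_cancel]

theorem P_apply_orbit {d : ℤ → X} (hd : ∀ n, d (n + 1) = A n (d n)) (n : ℤ) :
    Δ.P (n + 1) (d (n + 1)) = A n (Δ.P n (d n)) := by
  rw [hd]
  exact DFunLike.congr_fun (Δ.P_comm n) (d n)

theorem green_apply_orbit (hA : ∀ m, Function.Injective (A m)) {d : ℤ → X}
    (hd : ∀ n, d (n + 1) = A n (d n)) (n k : ℤ) :
    Δ.green n k (d k) = if k ≤ n then Δ.P n (d n) else Δ.P n (d n) - d n := by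
  have hP :=
    Δ.apply_eq_E_apply_of_orbit hA (d := fun n => Δ.P n (d n)) (Δ.P_apply_orbit hd) n k
  unfold green
  split_ifs
  · exact hP.symm
  · simp [hP, ← Δ.apply_eq_E_apply_of_orbit hA hd n k]

noncomputable def greenBound : ℝ := Δ.C * ∑' k : ℤ, Δ.q ^ k.natAbs

theorem greenBound_nonneg : 0 ≤ Δ.greenBound :=
  mul_nonneg Δ.C_nonneg (tsum_nonneg fun _ => pow_nonneg Δ.q_nonneg _)

theorem hasSum_green_bound (n : ℤ) :
    HasSum (fun k : ℤ => Δ.C * Δ.q ^ (n - (k + 1)).natAbs) Δ.greenBound := by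
  have h := (Equiv.subLeft (n - 1)).hasSum_iff.mpr
    (summable_pow_natAbs Δ.q_nonneg Δ.q_lt_one).hasSum
  have h' := h.mul_left Δ.C
  simp only [Function.comp_def, Equiv.subLeft_apply, sub_sub, add_comm (1 : ℤ)] at h'
  exact h'

noncomputable def greenSum (w : ℤ → X) (n : ℤ) : X := ∑' k : ℤ, Δ.green n (k + 1) (w k)

variable {Δ} {w w' : ℤ → X} {β β' : ℝ}

theorem norm_green_apply_le (hw : ∀ k, ‖w k‖ ≤ β) (n k : ℤ) :
    ‖Δ.green n (k + 1) (w k)‖ ≤ Δ.C * Δ.q ^ (n - (k + 1)).natAbs * β :=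
  (Δ.green n (k + 1)).le_of_opNorm_le_of_le (Δ.norm_green_le n _) (hw k)

theorem norm_greenSum_le (hw : ∀ k, ‖w k‖ ≤ β) (n : ℤ) :
    ‖Δ.greenSum w n‖ ≤ Δ.greenBound * β :=
  tsum_of_norm_bounded ((Δ.hasSum_green_bound n).mul_right β) (norm_green_apply_le hw n)

variable [CompleteSpace X]

theorem summable_green_apply (hw : ∀ k, ‖w k‖ ≤ β) (n : ℤ) :
    Summable fun k => Δ.green n (k + 1) (w k) :=
  .of_norm_bounded ((Δ.hasSum_green_bound n).mul_right β).summable (norm_green_apply_le hw n)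

theorem greenSum_sub (hw : ∀ k, ‖w k‖ ≤ β) (hw' : ∀ k, ‖w' k‖ ≤ β') (n : ℤ) :
    Δ.greenSum w n - Δ.greenSum w' n = Δ.greenSum (w - w') n := by
  simp only [greenSum, Pi.sub_apply, map_sub]
  exact ((summable_green_apply hw n).hasSum.sub
    (summable_green_apply hw' n).hasSum).tsum_eq.symm

theorem greenSum_succ (hw : ∀ k, ‖w k‖ ≤ β) (n : ℤ) :
    Δ.greenSum w (n + 1) = A n (Δ.greenSum w n) + w n := by
  have h := ((summable_green_apply (Δ := Δ) hw n).hasSum.mapL (A n)).add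
    (hasSum_ite_eq n (w n))
  unfold greenSum
  rw [← h.tsum_eq]
  refine tsum_congr fun k => ?_
  rw [green_succ]
  by_cases hk : k = n <;> simp [hk]

theorem exists_bounded_orbit_add {f : ℤ → X → X} {δ : ℝ} {κ : ℝ≥0}
    (hf : ∀ n x, ‖f n x‖ ≤ δ) (hfκ : ∀ n, LipschitzWith κ (f n)) (hκ : Δ.greenBound * κ < 1) :
    ∃ u : ℤ → X, (∃ ρ, ∀ n, ‖u n‖ ≤ ρ) ∧ ∀ n, u (n + 1) = A n (u n) + f n (u n) := by
  let T : (ℤ →ᵇ X) → (ℤ →ᵇ X) := fun u =>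
    .ofNormedAddCommGroupDiscrete (Δ.greenSum fun k => f k (u k)) (Δ.greenBound * δ)
      (norm_greenSum_le fun k => hf k (u k))
  have hT :
      ContractingWith ⟨Δ.greenBound * κ, mul_nonneg Δ.greenBound_nonneg κ.coe_nonneg⟩ T := by
    refine ⟨hκ, LipschitzWith.of_dist_le_mul fun u v => ?_⟩
    refine (BoundedContinuousFunction.dist_le
      (mul_nonneg (NNReal.coe_nonneg _) dist_nonneg)).2 fun n => ?_
    have huv : ∀ k, ‖f k (u k) - f k (v k)‖ ≤ κ * dist u v := fun k => by
      rw [← dist_eq_norm]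
      exact ((hfκ k).dist_le_mul _ _).trans
        (by gcongr; exact BoundedContinuousFunction.dist_coe_le_dist k)
    rw [dist_eq_norm]
    simp only [T, BoundedContinuousFunction.coe_ofNormedAddCommGroupDiscrete]
    rw [greenSum_sub (fun k => hf k (u k)) (fun k => hf k (v k))]
    exact (norm_greenSum_le (w := (fun k => f k (u k)) - fun k => f k (v k)) huv n).trans_eq
      (by rw [← mul_assoc]; rfl)
  let u := ContractingWith.fixedPoint T hT
  have hu : ∀ n, T u n = u n := fun n => by rw [hT.fixedPoint_isFixedPt]
  refine ⟨u, ⟨‖u‖, u.norm_coe_le_norm⟩, fun n => ?_⟩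
  calc u (n + 1) = T u (n + 1) := (hu _).symm
    _ = A n (T u n) + f n (u n) := greenSum_succ (fun k => hf k (u k)) n
    _ = A n (u n) + f n (u n) := by rw [hu]

theorem exists_shadowing_orbit {L : ℤ → X} (hL : ∀ n, L (n + 1) = A n (L n)) {g : ℤ → X → X}
    {δ : ℝ} {κ : ℝ≥0} (hg : ∀ n x, ‖g n x‖ ≤ δ) (hgκ : ∀ n, LipschitzWith κ (g n))
    (hκ : Δ.greenBound * κ < 1) :
    ∃ y : ℤ → X, (∃ ρ, ∀ n, ‖y n - L n‖ ≤ ρ) ∧ ∀ n, y (n + 1) = A n (y n) + g n (y n) := by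
  obtain ⟨u, ⟨ρ, hρ⟩, hu⟩ := Δ.exists_bounded_orbit_add (f := fun n x => g n (L n + x))
    (fun n x => hg n _) (fun n => LipschitzWith.of_dist_le_mul fun x y => by
      simpa [dist_add_left] using (hgκ n).dist_le_mul (L n + x) (L n + y)) hκ
  refine ⟨L + u, ⟨ρ, fun n => by simpa using hρ n⟩, fun n => ?_⟩
  simp only [Pi.add_apply, hL, hu, map_add, add_assoc]

end DichotomyData

theorem ExpDichotomy.eq_zero_of_bounded_orbit (hED : ExpDichotomy A)
    (hA : ∀ m, Function.Injective (A m)) {d : ℤ → X}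
    (hd : ∀ n, d (n + 1) = A n (d n)) {ρ : ℝ} (hρ : ∀ n, ‖d n‖ ≤ ρ) (n : ℤ) : d n = 0 := by
  obtain ⟨Δ⟩ := hED.nonempty_dichotomyData
  -- `green n k (d k)` depends only on whether `k ≤ n`, yet decays like `q ^ |n - k|`.
  have hbound : ∀ k, ‖Δ.green n k (d k)‖ ≤ Δ.C * ρ * Δ.q ^ (n - k).natAbs := fun k =>
    ((Δ.green n k).le_of_opNorm_le_of_le (Δ.norm_green_le n k) (hρ k)).trans_eq (by ring)
  have hstable : Δ.P n (d n) = 0 :=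
    eq_zero_of_eventually_norm_le_mul_pow Δ.q_nonneg Δ.q_lt_one <| .of_forall fun j => by
      simpa [Δ.green_apply_orbit hA hd] using hbound (n - j)
  have hunstable : Δ.P n (d n) - d n = 0 :=
    eq_zero_of_eventually_norm_le_mul_pow Δ.q_nonneg Δ.q_lt_one <|
      (eventually_ge_atTop 1).mono fun j hj => by
        have h := hbound (n + j)
        rwa [Δ.green_apply_orbit hA hd, if_neg (by omega),
          show (n - (n + j)).natAbs = j by omega] at h
  rw [← sub_sub_self (Δ.P n (d n)) (d n), hunstable, sub_zero, hstable]

end Dichotomy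

theorem grobman_hartman_surjective_general {X : Type*} [NormedAddCommGroup X]
    [NormedSpace ℝ X] [CompleteSpace X]
    (A : ℤ → X ≃L[ℝ] X)
    (hED : ExpDichotomy fun m => (A m : X →L[ℝ] X))
    (c : ℝ)
    (D r : ℝ) (hD : 0 < D) (hr : 0 < r) :
    ∃ δ > (0 : ℝ), ∃ ε > (0 : ℝ),
      ∀ (g : ℤ → X → X) (g' : ℤ → X → X →L[ℝ] X),
        (∀ n x, HasFDerivAt (g n) (g' n x) x) →
        (∀ n x, ‖g' n x‖ ≤ c / 2) →
        (∀ n x y, ‖g' n x - g' n y‖ ≤ D * ‖x - y‖ ^ r) →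
        (∀ n x, ‖g n x‖ ≤ δ) →
        (∀ n, IsHomeomorph fun x => A n x + g n x) →
        ∀ h : ℤ → X → X,
          (∀ (m : ℤ) (x : X), h (m + 1) (A m x + g m x) = A m (h m x)) →
          (∀ (m : ℤ) (x : X), ‖h m x - x‖ ≤ ε) →
          ∀ m : ℤ, Function.Surjective (h m) := by
  obtain ⟨Δ⟩ := hED.nonempty_dichotomyData
  obtain ⟨δ, hδ, κ, hκ, hlip⟩ :=
    exists_forall_lipschitzWith_of_norm_le_of_holder (E := X) (F := X)
      Δ.greenBound_nonneg hD.le hr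
  refine ⟨δ, hδ, 1, one_pos, fun g g' hg' _ hH hgδ _ h hconj hnear m z => ?_⟩
  let L n := Δ.E n m z
  have hL : ∀ n, L (n + 1) = A n (L n) := fun n => by simp [L, Δ.E_succ]
  obtain ⟨y, ⟨ρ, hyL⟩, hy⟩ :=
    Δ.exists_shadowing_orbit hL hgδ (fun n => hlip _ _ (hg' n) (hgδ n) (hH n)) hκ
  have hd : ∀ n,
      h (n + 1) (y (n + 1)) - L (n + 1) = (A n : X →L[ℝ] X) (h n (y n) - L n) := fun n => by
    rw [hy, hL, ContinuousLinearEquiv.coe_coe, hconj, map_sub]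
  have hbdd : ∀ n, ‖h n (y n) - L n‖ ≤ 1 + ρ := fun n =>
    calc ‖h n (y n) - L n‖ = ‖(h n (y n) - y n) + (y n - L n)‖ := by rw [sub_add_sub_cancel]
      _ ≤ 1 + ρ := (norm_add_le _ _).trans (add_le_add (hnear n _) (hyL n))
  have hzero := hED.eq_zero_of_bounded_orbit (fun k => (A k).injective)
    (d := fun n => h n (y n) - L n) hd hbdd m
  exact ⟨y m, by simpa [sub_eq_zero, L, Δ.E_self] using hzero⟩

/-- In the setting of the nonautonomous Grobman–Hartman theorem, the conjugating maps are surjective. -/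
theorem grobman_hartman_surjective {X : Type*} [NormedAddCommGroup X]
    [NormedSpace ℝ X] [CompleteSpace X]
    (A : ℤ → X ≃L[ℝ] X) (M : ℝ) (hM : ∀ m, ‖(A m : X →L[ℝ] X)‖ ≤ M)
    (hED : ExpDichotomy fun m => (A m : X →L[ℝ] X))
    (c : ℝ) (hc : 0 < c)
    (hrobust : ∀ B : ℤ → X →L[ℝ] X,
      (∀ m, ‖(A m : X →L[ℝ] X) - B m‖ ≤ c) → ExpDichotomy B)
    (D r : ℝ) (hD : 0 < D) (hr : 0 < r) :
    ∃ δ > (0 : ℝ), ∃ ε > (0 : ℝ),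
      ∀ (g : ℤ → X → X) (g' : ℤ → X → X →L[ℝ] X),
        (∀ n x, HasFDerivAt (g n) (g' n x) x) →
        (∀ n x, ‖g' n x‖ ≤ c / 2) →
        (∀ n x y, ‖g' n x - g' n y‖ ≤ D * ‖x - y‖ ^ r) →
        (∀ n x, ‖g n x‖ ≤ δ) →
        (∀ n, IsHomeomorph fun x => A n x + g n x) →
        ∀ h : ℤ → X → X,
          (∀ (m : ℤ) (x : X), h (m + 1) (A m x + g m x) = A m (h m x)) →
          (∀ (m : ℤ) (x : X), ‖h m x - x‖ ≤ ε) →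
          ∀ m : ℤ, Function.Surjective (h m) :=
  grobman_hartman_surjective_general A hED c D r hD hr
end
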